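/- Fix α, β > 0 and for λ > 0 set ξ₁(λ) = (ψ₁(λ) − ψ₁(α+λ)) / (ψ₁(λ) − ψ₁(α+β+λ)). Then, as λ → ∞, ξ₁(λ) = (α/(α+β)) · [ 1 + β/λ + β(1−2α)/(2λ²) + αβ(α−1)/λ³ − β(12α³−18α²+α−β+3)/(12λ⁴) ] + O(λ⁻⁵); that is, the difference between ξ₁(λ) and the displayed expansion is O(λ⁻⁵) as λ → ∞. -/

import Mathlib

/-!
Since `log Γ` is convex, `ψ₀` is monotone and `ψ₁ ≥ 0`; differentiating `Γ(x + 1) = x Γ(x)` gives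
`ψ₁(x + 1) = ψ₁(x) - 1/x²`. Monotonicity of `ψ₀` bounds the mean of `ψ₁` over `[x + n, x + n + δ]`
by `1/(δ(x + n))`, which forces `ψ₁(x + n) → 0`. The approximation `T = trigammaApprox` satisfies
the same recurrence up to a defect between `0` and `x⁻⁷ - (x + 1)⁻⁷`, so telescoping (both `ψ₁ - T`
and `x⁻⁷ - (ψ₁ - T)` decrease along `x + ℕ` to `0`) gives `0 ≤ ψ₁ - T ≤ x⁻⁷`. Consequently
`ψ₁(λ) - ψ₁(u + λ) = λ⁻² p_u(1/λ) + O(λ⁻⁷)` with the quartic `p_u = trigammaDiffPoly u`, and in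
particular `ψ₁(λ) - ψ₁(α + β + λ) ~ (α + β)/λ²`. The displayed expansion is the quartic
`m = xiOnePoly α β` in `1/λ` for which `p_α - m p_{α+β}` vanishes to order `5`; dividing an
`O(λ⁻⁷)` numerator by a denominator of size `λ⁻²` leaves `O(λ⁻⁵)`.
-/

open Filter Asymptotics

noncomputable def polygamma (n : ℕ) (x : ℝ) : ℝ :=
  iteratedDeriv (n + 1) (fun y => Real.log (Real.Gamma y)) x

open Real Set Topology

lemma Real.analyticAt_Gamma {x : ℝ} (hx : 0 < x) : AnalyticAt ℝ Gamma x := by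
  have hC : AnalyticAt ℂ Complex.Gamma x := by
    refine Complex.analyticAt_iff_eventually_differentiableAt.mpr ?_
    filter_upwards [continuousAt_const.eventually_lt Complex.continuous_re.continuousAt
      (by simpa using hx : (0 : ℝ) < (x : ℂ).re)] with z hz
    refine Complex.differentiableAt_Gamma z fun m hm => ?_
    simp only [hm, Complex.neg_re, Complex.natCast_re] at hz
    linarith [m.cast_nonneg (α := ℝ)]
  exact hC.re_ofReal

lemma contDiffOn_log_Gamma : ContDiffOn ℝ ⊤ (fun y => log (Gamma y)) (Ioi 0) := fun x hx =>
  ((contDiffAt_log.mpr (Gamma_pos_of_pos hx).ne').comp x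
    (analyticAt_Gamma hx).contDiffAt).contDiffWithinAt

lemma polygamma_zero_eq_deriv : polygamma 0 = deriv (fun y => log (Gamma y)) := by
  funext x; simp only [polygamma, zero_add, iteratedDeriv_one]

lemma polygamma_succ (n : ℕ) : polygamma (n + 1) = deriv (polygamma n) := by
  funext x; rw [polygamma, iteratedDeriv_succ]; rfl

lemma contDiffOn_polygamma (n : ℕ) : ContDiffOn ℝ ⊤ (polygamma n) (Ioi 0) := by
  induction n with
  | zero =>
    rw [polygamma_zero_eq_deriv]
    exact contDiffOn_log_Gamma.deriv_of_isOpen isOpen_Ioi le_top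
  | succ n ih => rw [polygamma_succ]; exact ih.deriv_of_isOpen isOpen_Ioi le_top

lemma hasDerivAt_log_Gamma {x : ℝ} (hx : 0 < x) :
    HasDerivAt (fun y => log (Gamma y)) (polygamma 0 x) x := by
  rw [polygamma_zero_eq_deriv]
  exact ((contDiffOn_log_Gamma.contDiffAt (Ioi_mem_nhds hx)).differentiableAt
    (by simp)).hasDerivAt

lemma hasDerivAt_polygamma (n : ℕ) {x : ℝ} (hx : 0 < x) :
    HasDerivAt (polygamma n) (polygamma (n + 1) x) x := by
  rw [polygamma_succ]
  exact (((contDiffOn_polygamma n).contDiffAt (Ioi_mem_nhds hx)).differentiableAt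
    (by simp)).hasDerivAt

lemma polygamma_zero_add_one {x : ℝ} (hx : 0 < x) :
    polygamma 0 (x + 1) = polygamma 0 x + x⁻¹ := by
  have hrec : (fun y => log (Gamma (y + 1))) =ᶠ[𝓝 x] fun y => log y + log (Gamma y) := by
    filter_upwards [eventually_gt_nhds hx] with y hy
    rw [Gamma_add_one hy.ne', log_mul hy.ne' (Gamma_pos_of_pos hy).ne']
  have h1 := (hasDerivAt_log_Gamma (by linarith : 0 < x + 1)).comp_add_const x 1
  have h2 := (hasDerivAt_log hx.ne').add (hasDerivAt_log_Gamma hx)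
  rw [add_comm (polygamma 0 x)]
  exact h1.unique (h2.congr_of_eventuallyEq hrec)

lemma polygamma_one_add_one {x : ℝ} (hx : 0 < x) :
    polygamma 1 (x + 1) = polygamma 1 x - (x ^ 2)⁻¹ := by
  have hrec : (fun y => polygamma 0 (y + 1)) =ᶠ[𝓝 x] fun y => polygamma 0 y + y⁻¹ := by
    filter_upwards [eventually_gt_nhds hx] with y hy
    exact polygamma_zero_add_one hy
  have h1 := (hasDerivAt_polygamma 0 (by linarith : 0 < x + 1)).comp_add_const x 1
  have h2 := (hasDerivAt_polygamma 0 hx).add (hasDerivAt_inv hx.ne')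
  rw [sub_eq_add_neg]
  exact h1.unique (h2.congr_of_eventuallyEq hrec)

lemma monotoneOn_polygamma_zero : MonotoneOn (polygamma 0) (Ioi 0) := by
  rw [polygamma_zero_eq_deriv]
  exact convexOn_log_Gamma.monotoneOn_deriv fun x hx => (hasDerivAt_log_Gamma hx).differentiableAt

lemma polygamma_one_nonneg {x : ℝ} (hx : 0 < x) : 0 ≤ polygamma 1 x := by
  rw [polygamma_succ, ← derivWithin_of_isOpen isOpen_Ioi hx]
  exact monotoneOn_polygamma_zero.derivWithin_nonneg

lemma polygamma_one_eq_sum_add {x : ℝ} (hx : 0 < x) (n : ℕ) :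
    polygamma 1 x = ∑ k ∈ Finset.range n, ((x + k) ^ 2)⁻¹ + polygamma 1 (x + n) := by
  induction n with
  | zero => simp
  | succ n ih =>
    rw [Finset.sum_range_succ, ih, Nat.cast_succ, ← add_assoc,
      polygamma_one_add_one (by positivity : 0 < x + n)]
    ring

lemma polygamma_one_add_nat_sub_le {x y : ℝ} (hx : 0 < x) (hxy : x ≤ y) (n : ℕ) :
    polygamma 1 (x + n) - polygamma 1 (y + n) ≤ polygamma 1 x - polygamma 1 y := by
  have hsum : ∑ k ∈ Finset.range n, ((y + k) ^ 2)⁻¹ ≤ ∑ k ∈ Finset.range n, ((x + k) ^ 2)⁻¹ :=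
    Finset.sum_le_sum fun k _ => by gcongr
  linarith [polygamma_one_eq_sum_add hx n, polygamma_one_eq_sum_add (hx.trans_le hxy) n]

lemma exists_polygamma_one_add_nat_le {x δ : ℝ} (hx : 0 < x) (hδ : 0 < δ) (hδ1 : δ ≤ 1)
    (n : ℕ) : ∃ y ∈ Ioo x (x + δ),
      polygamma 1 (x + n) ≤ (δ * (x + n))⁻¹ + (polygamma 1 x - polygamma 1 y) := by
  set a := x + (n : ℝ)
  have ha : 0 < a := by positivity
  obtain ⟨c, ⟨hac, hca⟩, hc⟩ := exists_hasDerivAt_eq_slope (polygamma 0) (polygamma 1)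
    (by linarith : a < a + δ)
    ((contDiffOn_polygamma 0).continuousOn.mono fun z hz => ha.trans_le hz.1)
    fun z hz => hasDerivAt_polygamma 0 (ha.trans hz.1)
  have hinc : polygamma 0 (a + δ) - polygamma 0 a ≤ a⁻¹ := by
    have := monotoneOn_polygamma_zero (by simp; linarith : a + δ ∈ Ioi 0)
      (by simp; linarith : a + 1 ∈ Ioi 0) (by linarith)
    linarith [polygamma_zero_add_one ha]
  refine ⟨c - n, ⟨by linarith, by linarith⟩, ?_⟩
  have hcomp := polygamma_one_add_nat_sub_le hx (by linarith : x ≤ c - n) n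
  rw [sub_add_cancel] at hcomp
  have hδc : polygamma 1 c ≤ (δ * a)⁻¹ := by
    rw [hc, add_sub_cancel_left, mul_inv, ← div_eq_inv_mul]
    gcongr
  linarith

lemma tendsto_polygamma_one_add_nat {x : ℝ} (hx : 0 < x) :
    Tendsto (fun n : ℕ => polygamma 1 (x + n)) atTop (𝓝 0) := by
  refine tendsto_order.2 ⟨fun a ha => Eventually.of_forall fun n =>
    ha.trans_le (polygamma_one_nonneg (by positivity)), fun ε hε => ?_⟩
  obtain ⟨δ₀, hδ₀, hclose⟩ := Metric.continuousAt_iff.1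
    ((contDiffOn_polygamma 1).continuousOn.continuousAt (Ioi_mem_nhds hx)) _ (half_pos hε)
  set δ := min δ₀ 1
  have hδ : 0 < δ := lt_min hδ₀ one_pos
  have hsmall : ∀ᶠ n : ℕ in atTop, (δ * (x + n))⁻¹ < ε / 2 :=
    (tendsto_inv_atTop_zero.comp ((tendsto_atTop_add_const_left _ x
      tendsto_natCast_atTop_atTop).const_mul_atTop hδ)).eventually (gt_mem_nhds (half_pos hε))
  filter_upwards [hsmall] with n hn
  obtain ⟨y, hy, hle⟩ := exists_polygamma_one_add_nat_le hx hδ (min_le_right _ _) n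
  have hxy : dist y x < δ₀ := by
    rw [Real.dist_eq, abs_lt]; constructor <;> linarith [hy.1, hy.2, min_le_left δ₀ 1]
  have := hclose hxy
  rw [Real.dist_eq, abs_lt] at this
  linarith [this.1]

/-- Partial sum of the asymptotic series `ψ₁(x) ∼ ∑ Bₖ / x^(k+1)`, with the Bernoulli numbers
`B₀ = 1, B₁ = 1/2, B₂ = 1/6, B₃ = 0, B₄ = -1/30`. -/
noncomputable def trigammaApprox (x : ℝ) : ℝ := x⁻¹ + (2 * x ^ 2)⁻¹ + (6 * x ^ 3)⁻¹ - (30 * x ^ 5)⁻¹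

lemma tendsto_trigammaApprox_atTop : Tendsto trigammaApprox atTop (𝓝 0) := by
  have h : ∀ k : ℕ, k ≠ 0 → ∀ c : ℝ, 0 < c → Tendsto (fun x : ℝ => (c * x ^ k)⁻¹) atTop (𝓝 0) :=
    fun k hk c hc => tendsto_inv_atTop_zero.comp ((tendsto_pow_atTop hk).const_mul_atTop hc)
  unfold trigammaApprox
  simpa using ((tendsto_inv_atTop_zero.add (h 2 two_ne_zero 2 two_pos)).add
    (h 3 three_ne_zero 6 (by norm_num))).sub (h 5 (by norm_num) 30 (by norm_num))

lemma inv_sq_sub_trigammaApprox_sub_add_one_mem_Icc {x : ℝ} (hx : 0 < x) :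
    (x ^ 2)⁻¹ - (trigammaApprox x - trigammaApprox (x + 1)) ∈
      Icc 0 ((x ^ 7)⁻¹ - ((x + 1) ^ 7)⁻¹) := by
  have hdefect : (x ^ 2)⁻¹ - (trigammaApprox x - trigammaApprox (x + 1)) =
      (1 + 5 * x + 5 * x ^ 2) / (30 * x ^ 5 * (x + 1) ^ 5) := by
    unfold trigammaApprox
    field_simp
    ring
  have hpoly : (1 + 5 * x + 5 * x ^ 2) * (x ^ 2 * (x + 1) ^ 2) ≤ 30 * ((x + 1) ^ 7 - x ^ 7) := by
    nlinarith [pow_pos hx 6, pow_pos hx 5, pow_pos hx 4, pow_pos hx 3, pow_pos hx 2]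
  rw [hdefect, inv_sub_inv (by positivity) (by positivity)]
  refine ⟨by positivity, ?_⟩
  rw [div_le_div_iff₀ (by positivity) (by positivity)]
  nlinarith [mul_le_mul_of_nonneg_right hpoly (by positivity : 0 ≤ x ^ 5 * (x + 1) ^ 5)]

lemma nonneg_of_antitone_add_nat {f : ℝ → ℝ} {x : ℝ} (hf : ∀ n : ℕ, f (x + n + 1) ≤ f (x + n))
    (hlim : Tendsto (fun n : ℕ => f (x + n)) atTop (𝓝 0)) : 0 ≤ f x := by
  refine (antitone_nat_of_succ_le fun n => ?_).le_of_tendsto hlim 0 |>.trans_eq (by simp)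
  simpa [add_assoc] using hf n

lemma polygamma_one_sub_trigammaApprox_mem_Icc {x : ℝ} (hx : 0 < x) :
    polygamma 1 x - trigammaApprox x ∈ Icc 0 (x ^ 7)⁻¹ := by
  have hstep (n : ℕ) := inv_sq_sub_trigammaApprox_sub_add_one_mem_Icc (by positivity : 0 < x + n)
  have hrec (n : ℕ) := polygamma_one_add_one (by positivity : 0 < x + n)
  have hshift : Tendsto (fun n : ℕ => x + n) atTop atTop :=
    tendsto_atTop_add_const_left _ x tendsto_natCast_atTop_atTop
  have hlim : Tendsto (fun n : ℕ => polygamma 1 (x + n) - trigammaApprox (x + n)) atTop (𝓝 0) := by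
    simpa using (tendsto_polygamma_one_add_nat hx).sub (tendsto_trigammaApprox_atTop.comp hshift)
  refine ⟨nonneg_of_antitone_add_nat (f := fun y => polygamma 1 y - trigammaApprox y)
    (fun n => ?_) hlim, sub_nonneg.1 <|
    nonneg_of_antitone_add_nat (f := fun y => (y ^ 7)⁻¹ - (polygamma 1 y - trigammaApprox y))
      (fun n => ?_) ?_⟩
  · linarith [(hstep n).1, hrec n]
  · linarith [(hstep n).2, hrec n]
  · simpa using
      (tendsto_inv_atTop_zero.comp ((tendsto_pow_atTop (by norm_num)).comp hshift)).sub hlim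

lemma isBigO_inv_pow_of_eventuallyEq_div_pow {f g : ℝ → ℝ} (k : ℕ) (hg : ContinuousAt g 0)
    (hf : ∀ᶠ l in atTop, f l = g l⁻¹ / l ^ k) : f =O[atTop] fun l => (l ^ k)⁻¹ := by
  have hbdd : (fun l : ℝ => g l⁻¹) =O[atTop] fun _ => (1 : ℝ) :=
    (hg.tendsto.comp tendsto_inv_atTop_zero).isBigO_one ℝ
  refine (hbdd.mul (isBigO_refl (fun l : ℝ => (l ^ k)⁻¹) atTop)).congr' ?_ (by simp)
  filter_upwards [hf] with l hl
  rw [hl, div_eq_mul_inv]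

noncomputable def trigammaDiffPoly (u t : ℝ) : ℝ :=
  u + (u - u ^ 2) * t + (u ^ 3 - 3 / 2 * u ^ 2 + u / 2) * t ^ 2
    + (2 * u ^ 3 - u ^ 4 - u ^ 2) * t ^ 3 + (u ^ 5 - 5 / 2 * u ^ 4 + 5 / 3 * u ^ 3 - u / 6) * t ^ 4

lemma isBigO_trigammaApprox_sub_shift (u : ℝ) :
    (fun l => trigammaApprox l - trigammaApprox (u + l) - trigammaDiffPoly u l⁻¹ / l ^ 2)
      =O[atTop] fun l => (l ^ 7)⁻¹ := by
  refine isBigO_inv_pow_of_eventuallyEq_div_pow 7 (g := fun t =>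
    ((15 * u ^ 2 - 75 * u ^ 4 + 90 * u ^ 5 - 30 * u ^ 6)
      + (40 * u ^ 3 - 270 * u ^ 5 + 345 * u ^ 6 - 120 * u ^ 7) * t
      + (45 * u ^ 4 - 365 * u ^ 6 + 495 * u ^ 7 - 180 * u ^ 8) * t ^ 2
      + (24 * u ^ 5 - 220 * u ^ 7 + 315 * u ^ 8 - 120 * u ^ 9) * t ^ 3
      + (5 * u ^ 6 - 50 * u ^ 8 + 75 * u ^ 9 - 30 * u ^ 10) * t ^ 4) / (30 * (1 + u * t) ^ 5))
    (ContinuousAt.div (by fun_prop) (by fun_prop) (by simp)) ?_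
  filter_upwards [eventually_gt_atTop 0, eventually_gt_atTop (-u)] with l hl hul
  have hul' : u + l ≠ 0 := by linarith
  have hshift : 1 + u * l⁻¹ = (u + l) / l := by field_simp; ring
  simp only [trigammaApprox, trigammaDiffPoly, hshift]
  field_simp
  ring

lemma isBigO_polygamma_one_sub_trigammaApprox :
    (fun x => polygamma 1 x - trigammaApprox x) =O[atTop] fun x => (x ^ 7)⁻¹ := by
  refine IsBigO.of_bound 1 ?_
  filter_upwards [eventually_gt_atTop 0] with x hx
  obtain ⟨h0, h1⟩ := polygamma_one_sub_trigammaApprox_mem_Icc hx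
  rw [Real.norm_of_nonneg h0, Real.norm_of_nonneg (by positivity), one_mul]
  exact h1

lemma isBigO_inv_pow_const_add (u : ℝ) (k : ℕ) :
    (fun l : ℝ => ((u + l) ^ k)⁻¹) =O[atTop] fun l => (l ^ k)⁻¹ := by
  have h : (fun l : ℝ => u + l) ~[atTop] id :=
    (isLittleO_const_id_atTop u).congr_left fun l => by simp
  exact ((h.pow k).inv).isBigO

lemma isBigO_polygamma_one_sub_shift (u : ℝ) :
    (fun l => polygamma 1 l - polygamma 1 (u + l) - trigammaDiffPoly u l⁻¹ / l ^ 2)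
      =O[atTop] fun l => (l ^ 7)⁻¹ := by
  have hE := isBigO_polygamma_one_sub_trigammaApprox
  have hE' := (hE.comp_tendsto (tendsto_atTop_add_const_left _ u tendsto_id)).trans
    (isBigO_inv_pow_const_add u 7)
  exact ((hE.sub hE').add (isBigO_trigammaApprox_sub_shift u)).congr_left fun l => by
    simp only [Function.comp_apply, id]; ring

lemma tendsto_sq_mul_polygamma_one_sub_shift (u : ℝ) :
    Tendsto (fun l => l ^ 2 * (polygamma 1 l - polygamma 1 (u + l))) atTop (𝓝 u) := by
  have hsq : Tendsto (fun l : ℝ => l ^ 2 * (l ^ 7)⁻¹) atTop (𝓝 0) :=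
    (tendsto_inv_atTop_zero.comp (tendsto_pow_atTop (by norm_num : 5 ≠ 0))).congr' <| by
      filter_upwards [eventually_ne_atTop 0] with l hl
      simp only [Function.comp_apply]
      field_simp
  have hrem := ((isBigO_refl (fun l : ℝ => l ^ 2) atTop).mul
    (isBigO_polygamma_one_sub_shift u)).trans_tendsto hsq
  have hpoly : Tendsto (fun l : ℝ => trigammaDiffPoly u l⁻¹) atTop (𝓝 u) := by
    have hc : Continuous (trigammaDiffPoly u) := by unfold trigammaDiffPoly; fun_prop
    have h0 : trigammaDiffPoly u 0 = u := by simp [trigammaDiffPoly]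
    have := (hc.tendsto 0).comp (tendsto_inv_atTop_zero (𝕜 := ℝ))
    rwa [h0] at this
  refine ((hrem.add hpoly).congr' ?_).trans (by simp)
  filter_upwards [eventually_ne_atTop 0] with l hl
  field_simp
  ring

noncomputable def xiOnePoly (α β t : ℝ) : ℝ :=
  α / (α + β) * (1 + β * t + β * (1 - 2 * α) / 2 * t ^ 2 + α * β * (α - 1) * t ^ 3
    - β * (12 * α ^ 3 - 18 * α ^ 2 + α - β + 3) / 12 * t ^ 4)

lemma xiOnePoly_inv (α β l : ℝ) :
    xiOnePoly α β l⁻¹ =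
      α / (α + β) *
        (1 + β / l + β * (1 - 2 * α) / (2 * l ^ 2) + α * β * (α - 1) / l ^ 3
          - β * (12 * α ^ 3 - 18 * α ^ 2 + α - β + 3) / (12 * l ^ 4)) := by
  simp only [xiOnePoly, div_eq_mul_inv, mul_inv, inv_pow]
  ring

lemma isBigO_trigammaDiffPoly_sub_xiOnePoly_mul {α β : ℝ} (hs : α + β ≠ 0) :
    (fun l => trigammaDiffPoly α l⁻¹ / l ^ 2
        - xiOnePoly α β l⁻¹ * (trigammaDiffPoly (α + β) l⁻¹ / l ^ 2))
      =O[atTop] fun l => (l ^ 7)⁻¹ := by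
  -- the terms of degree `≥ 5` of `xiOnePoly α β t * trigammaDiffPoly (α + β) t`, divided by `t⁵`;
  -- those of lower degree cancel `trigammaDiffPoly α t`
  refine isBigO_inv_pow_of_eventuallyEq_div_pow 7 (g := fun t => -(α / (α + β)) *
    (((α + β) ^ 5 - 5 / 2 * (α + β) ^ 4 + 5 / 3 * (α + β) ^ 3 - (α + β) / 6) *
        (β + β * (1 - 2 * α) / 2 * t + α * β * (α - 1) * t ^ 2
          - β * (12 * α ^ 3 - 18 * α ^ 2 + α - β + 3) / 12 * t ^ 3)
      + (2 * (α + β) ^ 3 - (α + β) ^ 4 - (α + β) ^ 2) *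
        (β * (1 - 2 * α) / 2 + α * β * (α - 1) * t
          - β * (12 * α ^ 3 - 18 * α ^ 2 + α - β + 3) / 12 * t ^ 2)
      + ((α + β) ^ 3 - 3 / 2 * (α + β) ^ 2 + (α + β) / 2) *
        (α * β * (α - 1) - β * (12 * α ^ 3 - 18 * α ^ 2 + α - β + 3) / 12 * t)
      - ((α + β) - (α + β) ^ 2) * (β * (12 * α ^ 3 - 18 * α ^ 2 + α - β + 3) / 12)))
    (by fun_prop) ?_
  filter_upwards [eventually_ne_atTop 0] with l hl
  simp only [trigammaDiffPoly, xiOnePoly]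
  field_simp
  ring

/-- Lemma `lm:exp1`: the asymptotic expansion, as `λ → ∞`, of
`ξ₁(λ) = (ψ₁(λ) − ψ₁(α+λ)) / (ψ₁(λ) − ψ₁(α+β+λ))`, with error `O(λ⁻⁵)`. -/
theorem xi_one_expansion (α β : ℝ) (hα : 0 < α) (hβ : 0 < β) :
    (fun lam : ℝ =>
        (polygamma 1 lam - polygamma 1 (α + lam)) /
            (polygamma 1 lam - polygamma 1 (α + β + lam)) -
          α / (α + β) *
            (1 + β / lam + β * (1 - 2 * α) / (2 * lam ^ 2)
              + α * β * (α - 1) / lam ^ 3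
              - β * (12 * α ^ 3 - 18 * α ^ 2 + α - β + 3) / (12 * lam ^ 4)))
      =O[atTop] fun lam : ℝ => (lam ^ 5)⁻¹ := by
  have hs : α + β ≠ 0 := by positivity
  simp only [← xiOnePoly_inv]
  have hM : (fun l : ℝ => xiOnePoly α β l⁻¹) =O[atTop] fun _ => (1 : ℝ) := by
    have hc : Continuous (xiOnePoly α β) := by unfold xiOnePoly; fun_prop
    exact ((hc.tendsto 0).comp tendsto_inv_atTop_zero).isBigO_one ℝ
  have hMD := (hM.mul (isBigO_polygamma_one_sub_shift (α + β))).congr_right fun _ => one_mul _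
  have hnum : (fun l => polygamma 1 l - polygamma 1 (α + l)
      - xiOnePoly α β l⁻¹ * (polygamma 1 l - polygamma 1 (α + β + l))) =O[atTop]
        fun l => (l ^ 7)⁻¹ :=
    (((isBigO_polygamma_one_sub_shift α).sub hMD).add
      (isBigO_trigammaDiffPoly_sub_xiOnePoly_mul hs)).congr_left fun l => by ring
  have hD := tendsto_sq_mul_polygamma_one_sub_shift (α + β)
  have hDinv := (hD.inv₀ hs).isBigO_one ℝ
  refine ((hnum.mul hDinv).mul (isBigO_refl (fun l : ℝ => l ^ 2) atTop)).congr' ?_ ?_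
  · filter_upwards [hD.eventually_ne hs] with l hl
    have hl0 : l ≠ 0 := by rintro rfl; simp at hl
    have hDl : polygamma 1 l - polygamma 1 (α + β + l) ≠ 0 := by rintro h; simp [h] at hl
    field_simp
  · filter_upwards [eventually_ne_atTop 0] with l hl
    field_simp
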